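/- Let a > 0, let o ∈ ℝ², and let t, t′ ∈ ℝ² be points with a ≤ ‖o − t‖ ≤ (5/2)a and a ≤ ‖o − t′‖ ≤ (5/2)a, such that the angle between the vectors t − o and t′ − o is at most π/4. If r_t ≥ a and r_{t′} ≥ a, then ‖t − t′‖ ≤ 2a ≤ r_t + r_{t′}, so the disks D(t, r_t) and D(t′, r_{t′}) intersect. -/

import Mathlib

/-!
By the law of cosines, `‖t - t'‖² ≤ r² + r'² - 2 r r' cos (π/4)` where `r, r'` are the distances
of `t, t'` from `o`. Since `cos (π/4) ≥ 7/10` and `r² + r'² - (7/5) r r'` is convex in each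
variable, its maximum over `[a, 5a/2]²` is attained at a corner, where it is at most `(15/4) a²`.
-/

open Real EuclideanGeometry

theorem EuclideanGeometry.dist_sq_le_of_angle_le {V P : Type*} [NormedAddCommGroup V]
    [InnerProductSpace ℝ V] [MetricSpace P] [NormedAddTorsor V P] {p₁ p p₂ : P} {θ : ℝ}
    (hθ : θ ≤ π) (h : ∠ p₁ p p₂ ≤ θ) :
    dist p₁ p₂ ^ 2 ≤ dist p₁ p ^ 2 + dist p₂ p ^ 2 - 2 * dist p₁ p * dist p₂ p * cos θ := by
  have hcos : cos θ ≤ cos (∠ p₁ p p₂) := cos_le_cos_of_nonneg_of_le_pi (angle_nonneg _ _ _) hθ h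
  have hprod : 0 ≤ dist p₁ p * dist p₂ p := mul_nonneg dist_nonneg dist_nonneg
  rw [sq, law_cos p₁ p p₂]
  nlinarith

theorem seven_tenths_le_cos_pi_div_four : (7 / 10 : ℝ) ≤ cos (π / 4) := by
  rw [cos_pi_div_four, le_div_iff₀ two_pos, le_sqrt] <;> norm_num

theorem sq_add_sq_sub_mul_le_of_mem_Icc {a x y c : ℝ} (hc : 7 / 10 ≤ c)
    (hx : x ∈ Set.Icc a (5 / 2 * a)) (hy : y ∈ Set.Icc a (5 / 2 * a)) :
    x ^ 2 + y ^ 2 - 2 * x * y * c ≤ (2 * a) ^ 2 := by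
  obtain ⟨hx₁, hx₂⟩ := hx
  obtain ⟨hy₁, hy₂⟩ := hy
  have hxy : 0 ≤ x * y := by nlinarith
  have hcorner : x ^ 2 + y ^ 2 - 7 / 5 * x * y ≤ (2 * a) ^ 2 := by
    nlinarith [mul_nonneg (sub_nonneg.2 hx₁) (sub_nonneg.2 hy₂),
      mul_nonneg (sub_nonneg.2 hy₁) (sub_nonneg.2 hx₂),
      mul_nonneg (sub_nonneg.2 hx₁) (sub_nonneg.2 hx₂),
      mul_nonneg (sub_nonneg.2 hy₁) (sub_nonneg.2 hy₂)]
  nlinarith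

theorem middle_region_clique_general
    (a : ℝ) (o t t' : EuclideanSpace ℝ (Fin 2))
    (ht₁ : a ≤ dist o t) (ht₂ : dist o t ≤ (5/2) * a)
    (ht'₁ : a ≤ dist o t') (ht'₂ : dist o t' ≤ (5/2) * a)
    (hangle : EuclideanGeometry.angle t o t' ≤ Real.pi / 4)
    (rt rt' : ℝ) (hrt : a ≤ rt) (hrt' : a ≤ rt') :
    dist t t' ≤ 2 * a ∧ 2 * a ≤ rt + rt' := by
  refine ⟨?_, by linarith⟩
  have hlaw := dist_sq_le_of_angle_le (by linarith [pi_pos]) hangle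
  rw [dist_comm t o, dist_comm t' o] at hlaw
  have hbound := sq_add_sq_sub_mul_le_of_mem_Icc seven_tenths_le_cos_pi_div_four
    ⟨ht₁, ht₂⟩ ⟨ht'₁, ht'₂⟩
  exact le_of_sq_le_sq (hlaw.trans hbound) (by linarith [dist_nonneg (x := o) (y := t)])

/-- Middle region clique: two sites in the annulus with radii `[a, (5/2)a]`
around `o`, seen from `o` under an angle of at most `π/4`, are at distance at
most `2a`, which is at most the sum of their (≥ a) radii. -/
theorem middle_region_clique
    (a : ℝ) (ha : 0 < a) (o t t' : EuclideanSpace ℝ (Fin 2))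
    (ht₁ : a ≤ dist o t) (ht₂ : dist o t ≤ (5/2) * a)
    (ht'₁ : a ≤ dist o t') (ht'₂ : dist o t' ≤ (5/2) * a)
    (hangle : EuclideanGeometry.angle t o t' ≤ Real.pi / 4)
    (rt rt' : ℝ) (hrt : a ≤ rt) (hrt' : a ≤ rt') :
    dist t t' ≤ 2 * a ∧ 2 * a ≤ rt + rt' :=
  middle_region_clique_general a o t t' ht₁ ht₂ ht'₁ ht'₂ hangle rt rt' hrt hrt'
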